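/- arXiv:2310.17531 — 5 statements merged into one kernel-verified Lean document; each statement's English description precedes it below -/
import Mathlib

section
/- Let p*, p be probability distributions on a finite set A, let 0 < β < 1, and let p̂ = (1−β)p + β·Unif(A). Then KL(p*‖p̂) − KL(p*‖p) ≤ β/(1−β). -/
/-!
Since `p̂ ≥ (1 - β) p` pointwise, the difference of the two divergences is the `p*`-average of
`log (p / p̂) ≤ log (1 / (1 - β))`, and `log x ≤ x - 1`.
-/

open Finset

namespace Real

variable {ι : Type*} [Fintype ι]

theorem sum_mul_log_div_sub_sum_mul_log_div {r p q : ι → ℝ} (hr : ∀ a, 0 ≤ r a)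
    (hp : ∀ a, 0 < p a) (hq : ∀ a, 0 < q a) :
    (∑ a, r a * log (r a / q a)) - ∑ a, r a * log (r a / p a) = ∑ a, r a * log (p a / q a) := by
  rw [← sum_sub_distrib]
  refine sum_congr rfl fun a _ => ?_
  rcases (hr a).eq_or_lt with hra | hra
  · simp [← hra]
  · rw [log_div hra.ne' (hq a).ne', log_div hra.ne' (hp a).ne', log_div (hp a).ne' (hq a).ne']
    ring

theorem log_div_le_log_inv_of_mul_le {c x y : ℝ} (hc : 0 < c) (hx : 0 < x) (hxy : c * x ≤ y) :
    log (x / y) ≤ log c⁻¹ := by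
  have hy : 0 < y := lt_of_lt_of_le (mul_pos hc hx) hxy
  apply log_le_log (div_pos hx hy)
  rw [div_le_iff₀ hy, ← div_eq_inv_mul, le_div_iff₀ hc, mul_comm]
  exact hxy

theorem sum_mul_log_div_le_log_inv_of_mul_le {c : ℝ} {r p q : ι → ℝ} (hc : 0 < c)
    (hr : ∀ a, 0 ≤ r a) (hrsum : ∑ a, r a = 1) (hp : ∀ a, 0 < p a)
    (hpq : ∀ a, c * p a ≤ q a) :
    ∑ a, r a * log (p a / q a) ≤ log c⁻¹ :=
  calc ∑ a, r a * log (p a / q a)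
      ≤ ∑ a, r a * log c⁻¹ := sum_le_sum fun a _ =>
        mul_le_mul_of_nonneg_left (log_div_le_log_inv_of_mul_le hc (hp a) (hpq a)) (hr a)
    _ = log c⁻¹ := by rw [← sum_mul, hrsum, one_mul]

end Real

theorem kl_mixture_diff_le_general {A : Type*} [Fintype A]
    (pstar p : A → ℝ) (hps : ∀ a, 0 ≤ pstar a) (hp : ∀ a, 0 < p a)
    (hpssum : ∑ a, pstar a = 1)
    (β : ℝ) (hβ0 : 0 < β) (hβ1 : β < 1) :
    (∑ a, pstar a * Real.log (pstar a / ((1 - β) * p a + β / (Fintype.card A))))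
      - (∑ a, pstar a * Real.log (pstar a / p a))
      ≤ β / (1 - β) := by
  have h1β : 0 < 1 - β := by linarith
  have hdom : ∀ a, (1 - β) * p a ≤ (1 - β) * p a + β / Fintype.card A := fun a =>
    le_add_of_nonneg_right (by positivity)
  have hmix : ∀ a, 0 < (1 - β) * p a + β / Fintype.card A := fun a =>
    lt_of_lt_of_le (mul_pos h1β (hp a)) (hdom a)
  rw [Real.sum_mul_log_div_sub_sum_mul_log_div hps hp hmix]
  calc _ ≤ Real.log (1 - β)⁻¹ :=
        Real.sum_mul_log_div_le_log_inv_of_mul_le h1β hps hpssum hp hdom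
    _ ≤ (1 - β)⁻¹ - 1 := Real.log_le_sub_one_of_pos (inv_pos.mpr h1β)
    _ = β / (1 - β) := by field_simp; ring

/-- For probability distributions `p*`, `p` on a nonempty finite set `A` with `p` everywhere
positive, `0 < β < 1`, and `p̂ = (1 - β) p + β · Unif(A)`, one has
`KL(p* ‖ p̂) - KL(p* ‖ p) ≤ β / (1 - β)`. -/
theorem kl_mixture_diff_le {A : Type*} [Fintype A] [Nonempty A]
    (pstar p : A → ℝ) (hps : ∀ a, 0 ≤ pstar a) (hp : ∀ a, 0 < p a)
    (hpssum : ∑ a, pstar a = 1) (hpsum : ∑ a, p a = 1)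
    (β : ℝ) (hβ0 : 0 < β) (hβ1 : β < 1) :
    (∑ a, pstar a * Real.log (pstar a / ((1 - β) * p a + β / (Fintype.card A))))
      - (∑ a, pstar a * Real.log (pstar a / p a))
      ≤ β / (1 - β) :=
  kl_mixture_diff_le_general pstar p hps hp hpssum β hβ0 hβ1
end

section
/- Let X be a nonempty compact convex subset of a normed space and f : X → ℝ a differentiable k-strongly convex function with respect to the norm ‖·‖, i.e., f(x) ≥ f(y) + ⟨∇f(y), x−y⟩ + (k/2)‖x−y‖² for all x,y ∈ X. For two linear functionals y₁, y₂, let xᵢ = argmax_{x∈X} (⟨x, yᵢ⟩ − f(x)) for i = 1,2. Then ‖x₁ − x₂‖ ≤ ‖y₁ − y₂‖_* / k, where ‖·‖_* is the dual norm. -/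
/-! The gradient inequality makes `f` strongly convex in the chord sense, and so is `f - y` for
every linear `y`. Hence the maximiser `xᵢ` of `yᵢ - f` beats every other point of `X` by the
quadratic margin `k/2 ‖x - xᵢ‖²`. Adding the two margins (each maximiser compared with the other)
gives `k ‖x₁ - x₂‖² ≤ (y₁ - y₂) (x₁ - x₂) ≤ ‖y₁ - y₂‖ ‖x₁ - x₂‖`. -/

open Filter Topology

section StrongConvexity

variable {E : Type*} [NormedAddCommGroup E] [NormedSpace ℝ E] {s : Set E} {f : E → ℝ} {m : ℝ}

lemma Convex.strongConvexOn_of_subgradient (hs : Convex ℝ s) (f' : E → E →L[ℝ] ℝ)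
    (hf : ∀ x ∈ s, ∀ y ∈ s, f y + f' y (x - y) + m / 2 * ‖x - y‖ ^ 2 ≤ f x) :
    StrongConvexOn s m f := by
  refine ⟨hs, fun x hx y hy a b ha hb hab ↦ ?_⟩
  set z := a • x + b • y
  have hz : z ∈ s := hs hx hy ha hb hab
  obtain rfl : b = 1 - a := by linarith
  have hxz : x - z = (1 - a) • (x - y) := by module
  have hyz : y - z = (-a) • (x - y) := by module
  have hx' := hf x hx z hz
  have hy' := hf y hy z hz
  rw [hxz, map_smul, norm_smul, Real.norm_of_nonneg hb, smul_eq_mul] at hx'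
  rw [hyz, map_smul, norm_smul, norm_neg, Real.norm_of_nonneg ha, smul_eq_mul] at hy'
  simp only [smul_eq_mul]
  linarith [mul_le_mul_of_nonneg_left hx' ha, mul_le_mul_of_nonneg_left hy' hb]

lemma StrongConvexOn.sub_continuousLinearMap (hf : StrongConvexOn s m f) (ℓ : E →L[ℝ] ℝ) :
    StrongConvexOn s m (fun x ↦ f x - ℓ x) := by
  refine ⟨hf.1, fun x hx y hy a b ha hb hab ↦ ?_⟩
  have := hf.2 hx hy ha hb hab
  simp only [map_add, map_smul, smul_eq_mul] at this ⊢
  linarith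

lemma StrongConvexOn.add_sq_le_of_isMinOn {a b : E} (hf : StrongConvexOn s m f)
    (ha : a ∈ s) (hmin : IsMinOn f s a) (hb : b ∈ s) : f a + m / 2 * ‖b - a‖ ^ 2 ≤ f b := by
  have hchord : ∀ t ∈ Set.Ioo (0 : ℝ) 1, m / 2 * (1 - t) * ‖b - a‖ ^ 2 ≤ f b - f a := by
    rintro t ⟨ht₀, ht₁⟩
    have hmem := hf.1 ha hb (sub_nonneg.2 ht₁.le) ht₀.le (sub_add_cancel 1 t)
    have hconv := hf.2 ha hb (sub_nonneg.2 ht₁.le) ht₀.le (sub_add_cancel 1 t)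
    have hle : f a ≤ f ((1 - t) • a + t • b) := hmin hmem
    rw [norm_sub_rev] at hconv
    simp only [smul_eq_mul] at hconv
    have : t * (m / 2 * (1 - t) * ‖b - a‖ ^ 2) ≤ t * (f b - f a) := by linarith
    exact le_of_mul_le_mul_left this ht₀
  have hlim : Tendsto (fun t : ℝ ↦ m / 2 * (1 - t) * ‖b - a‖ ^ 2) (𝓝[>] 0)
      (𝓝 (m / 2 * (1 - 0) * ‖b - a‖ ^ 2)) :=
    tendsto_nhdsWithin_of_tendsto_nhds (by fun_prop : Continuous _).continuousAt.tendsto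
  have := le_of_tendsto hlim (mem_of_superset (Ioo_mem_nhdsGT one_pos) hchord)
  rw [sub_zero, mul_one] at this
  linarith

end StrongConvexity

lemma le_div_of_mul_sq_le_mul {k r c : ℝ} (hk : 0 < k) (hr : 0 ≤ r) (hc : 0 ≤ c)
    (h : k * r ^ 2 ≤ c * r) : r ≤ c / k := by
  rcases hr.eq_or_lt with rfl | hr
  · positivity
  · rw [le_div_iff₀ hk]
    nlinarith

theorem strongly_convex_argmax_lipschitz_general {E : Type*} [NormedAddCommGroup E]
    [NormedSpace ℝ E] (X : Set E)
    (hXconv : Convex ℝ X)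
    (f : E → ℝ) (f' : E → (E →L[ℝ] ℝ)) (k : ℝ) (hk : 0 < k)
    (hsc : ∀ x ∈ X, ∀ y ∈ X, f y + f' y (x - y) + k / 2 * ‖x - y‖ ^ 2 ≤ f x)
    (y₁ y₂ : E →L[ℝ] ℝ) (x₁ x₂ : E) (hx₁ : x₁ ∈ X) (hx₂ : x₂ ∈ X)
    (hmax₁ : ∀ x ∈ X, y₁ x - f x ≤ y₁ x₁ - f x₁)
    (hmax₂ : ∀ x ∈ X, y₂ x - f x ≤ y₂ x₂ - f x₂) :
    ‖x₁ - x₂‖ ≤ ‖y₁ - y₂‖ / k := by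
  have hf : StrongConvexOn X k f := hXconv.strongConvexOn_of_subgradient f' hsc
  have h₁ := (hf.sub_continuousLinearMap y₁).add_sq_le_of_isMinOn hx₁
    (isMinOn_iff.2 fun x hx ↦ by linarith [hmax₁ x hx]) hx₂
  have h₂ := (hf.sub_continuousLinearMap y₂).add_sq_le_of_isMinOn hx₂
    (isMinOn_iff.2 fun x hx ↦ by linarith [hmax₂ x hx]) hx₁
  refine le_div_of_mul_sq_le_mul hk (norm_nonneg _) (norm_nonneg _) ?_
  calc k * ‖x₁ - x₂‖ ^ 2 ≤ (y₁ - y₂) (x₁ - x₂) := by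
        simp only [sub_apply, map_sub, norm_sub_rev x₂ x₁] at h₁ h₂ ⊢
        linarith
    _ ≤ ‖y₁ - y₂‖ * ‖x₁ - x₂‖ := (le_abs_self _).trans ((y₁ - y₂).le_opNorm _)

/-- Let `X` be a nonempty compact convex subset of a real normed space and let `f` be a
`k`-strongly convex function on `X` with (Gateaux) gradient `f'`, i.e.
`f x ≥ f y + f' y (x - y) + k/2 * ‖x - y‖²` for all `x, y ∈ X`.  If `x₁`, `x₂` are the
maximizers over `X` of `x ↦ y₁ x - f x` and `x ↦ y₂ x - f x` respectively, for continuous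
linear functionals `y₁, y₂`, then `‖x₁ - x₂‖ ≤ ‖y₁ - y₂‖ / k`, where the norm of a
functional is the dual norm. -/
theorem strongly_convex_argmax_lipschitz {E : Type*} [NormedAddCommGroup E]
    [NormedSpace ℝ E] (X : Set E) (hX : X.Nonempty) (hXc : IsCompact X)
    (hXconv : Convex ℝ X)
    (f : E → ℝ) (f' : E → (E →L[ℝ] ℝ)) (k : ℝ) (hk : 0 < k)
    (hsc : ∀ x ∈ X, ∀ y ∈ X, f y + f' y (x - y) + k / 2 * ‖x - y‖ ^ 2 ≤ f x)
    (y₁ y₂ : E →L[ℝ] ℝ) (x₁ x₂ : E) (hx₁ : x₁ ∈ X) (hx₂ : x₂ ∈ X)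
    (hmax₁ : ∀ x ∈ X, y₁ x - f x ≤ y₁ x₁ - f x₁)
    (hmax₂ : ∀ x ∈ X, y₂ x - f x ≤ y₂ x₂ - f x₂) :
    ‖x₁ - x₂‖ ≤ ‖y₁ - y₂‖ / k :=
  strongly_convex_argmax_lipschitz_general X hXconv f f' k hk hsc y₁ y₂ x₁ x₂ hx₁ hx₂ hmax₁ hmax₂
end

section
/- Let p, q, u be probability distributions on a finite set X such that p(x) ≥ α₁, q(x) ≥ α₁, and u(x) ≥ α₂ for all x ∈ X, where α₁, α₂ ∈ (0,1]. Then KL(p‖u) − KL(q‖u) ≤ (1 + log(1/min{α₁, α₂})) · ‖p − q‖₁. -/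
open Finset

private lemma aux_mul_log_div_le (a b : ℝ) (ha : 0 < a) (hb : 0 < b) :
    a * Real.log (b / a) ≤ b - a := by
  have h := Real.log_le_sub_one_of_pos (div_pos hb ha)
  have hc : a * (b / a) = b := mul_div_cancel₀ b ha.ne'
  nlinarith

private lemma aux_sub_le_mul_log_div (a b : ℝ) (ha : 0 < a) (hb : 0 < b) :
    b - a ≤ b * Real.log (b / a) := by
  have h := Real.log_le_sub_one_of_pos (div_pos ha hb)
  have hlog : Real.log (a / b) = -Real.log (b / a) := by
    rw [Real.log_div ha.ne' hb.ne', Real.log_div hb.ne' ha.ne']; ring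
  have hc : b * (a / b) = a := mul_div_cancel₀ a hb.ne'
  nlinarith

private lemma aux_ptwise (a b u L : ℝ) (ha : 0 < a) (hb : 0 < b) (hu : 0 < u)
    (h1 : |Real.log (a / u)| ≤ L) (h2 : |Real.log (b / u)| ≤ L) :
    a * Real.log (a / u) - b * Real.log (b / u) ≤ (1 + L) * |a - b| := by
  set la := Real.log (a / u) with hla
  set lb := Real.log (b / u) with hlb
  have hL1 := abs_le.mp h1
  have hL2 := abs_le.mp h2
  rcases le_total a b with h | h
  · have key := aux_sub_le_mul_log_div a b ha hb
    have hsplit : Real.log (b / a) = lb - la := by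
      rw [hla, hlb, Real.log_div hb.ne' ha.ne', Real.log_div hb.ne' hu.ne',
        Real.log_div ha.ne' hu.ne']; ring
    rw [hsplit] at key
    rw [abs_of_nonpos (by linarith)]
    nlinarith [mul_nonneg (sub_nonneg.mpr h) (by linarith [hL1.1] : (0:ℝ) ≤ L + la)]
  · have key := aux_mul_log_div_le b a hb ha
    have hsplit : Real.log (a / b) = la - lb := by
      rw [hla, hlb, Real.log_div ha.ne' hb.ne', Real.log_div hb.ne' hu.ne',
        Real.log_div ha.ne' hu.ne']; ring
    rw [hsplit] at key
    rw [abs_of_nonneg (by linarith)]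
    nlinarith [mul_nonneg (sub_nonneg.mpr h) (by linarith [hL1.2] : (0:ℝ) ≤ L - la)]

private lemma aux_abs_log_le (t u α : ℝ) (hα : 0 < α) (ht0 : α ≤ t) (ht1 : t ≤ 1)
    (hu0 : α ≤ u) (hu1 : u ≤ 1) : |Real.log (t / u)| ≤ Real.log (1 / α) := by
  have htpos : 0 < t := lt_of_lt_of_le hα ht0
  have hupos : 0 < u := lt_of_lt_of_le hα hu0
  rw [Real.log_div htpos.ne' hupos.ne', Real.log_div one_ne_zero hα.ne', Real.log_one]
  have h1 : Real.log α ≤ Real.log t := Real.log_le_log hα ht0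
  have h2 : Real.log α ≤ Real.log u := Real.log_le_log hα hu0
  have h3 : Real.log t ≤ 0 := Real.log_nonpos htpos.le ht1
  have h4 : Real.log u ≤ 0 := Real.log_nonpos hupos.le hu1
  rw [abs_le]; constructor <;> linarith

/-- For probability distributions `p, q, u` on a nonempty finite set `X` with
`p x ≥ α₁`, `q x ≥ α₁`, `u x ≥ α₂` for all `x`, one has
`KL(p ‖ u) - KL(q ‖ u) ≤ (1 + log (1 / min α₁ α₂)) * ‖p - q‖₁`. -/
theorem kl_diff_lipschitz {X : Type*} [Fintype X] [Nonempty X]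
    (p q u : X → ℝ) (α₁ α₂ : ℝ)
    (hα₁0 : 0 < α₁) (hα₁1 : α₁ ≤ 1) (hα₂0 : 0 < α₂) (hα₂1 : α₂ ≤ 1)
    (hp : ∀ x, α₁ ≤ p x) (hq : ∀ x, α₁ ≤ q x) (hu : ∀ x, α₂ ≤ u x)
    (hpsum : ∑ x, p x = 1) (hqsum : ∑ x, q x = 1) (husum : ∑ x, u x = 1) :
    (∑ x, p x * Real.log (p x / u x)) - (∑ x, q x * Real.log (q x / u x))
      ≤ (1 + Real.log (1 / min α₁ α₂)) * ∑ x, |p x - q x| := by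
  set α := min α₁ α₂ with hαdef
  have hα0 : 0 < α := lt_min hα₁0 hα₂0
  have hα1 : α ≤ 1 := le_trans (min_le_left _ _) hα₁1
  have hp1 : ∀ x, p x ≤ 1 := by
    intro x
    calc p x ≤ ∑ y, p y := single_le_sum (fun i _ => le_trans hα₁0.le (hp i)) (mem_univ x)
    _ = 1 := hpsum
  have hq1 : ∀ x, q x ≤ 1 := by
    intro x
    calc q x ≤ ∑ y, q y := single_le_sum (fun i _ => le_trans hα₁0.le (hq i)) (mem_univ x)
    _ = 1 := hqsum
  have hu1 : ∀ x, u x ≤ 1 := by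
    intro x
    calc u x ≤ ∑ y, u y := single_le_sum (fun i _ => le_trans hα₂0.le (hu i)) (mem_univ x)
    _ = 1 := husum
  rw [← Finset.sum_sub_distrib, Finset.mul_sum]
  apply Finset.sum_le_sum
  intro x _
  have hpx : 0 < p x := lt_of_lt_of_le hα₁0 (hp x)
  have hqx : 0 < q x := lt_of_lt_of_le hα₁0 (hq x)
  have hux : 0 < u x := lt_of_lt_of_le hα₂0 (hu x)
  apply aux_ptwise _ _ _ _ hpx hqx hux
  · exact aux_abs_log_le _ _ α hα0 (le_trans (min_le_left _ _) (hp x)) (hp1 x)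
      (le_trans (min_le_right _ _) (hu x)) (hu1 x)
  · exact aux_abs_log_le _ _ α hα0 (le_trans (min_le_left _ _) (hq x)) (hq1 x)
      (le_trans (min_le_right _ _) (hu x)) (hu1 x)
end

section
/- Let A be a finite set, p and p* probability distributions on A, g : A → [0, H] a function with H ≥ 0, α > 0, and let q be the distribution q(a) ∝ p(a) exp(α g(a)). Then ⟨g, p* − p⟩ ≤ αH²/2 + α⁻¹ (KL(p*‖p) − KL(p*‖q)), where ⟨g, μ⟩ = Σ_a g(a) μ(a). -/
/-!
With `Z = ∑ a, p a * exp (α * g a)`, the definition of `q` gives the exact identity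
`KL(p* ‖ p) - KL(p* ‖ q) = α ⟨g, p*⟩ - log Z`, while Hoeffding's lemma for the weights `p`
gives `log Z ≤ α ⟨g, p⟩ + α² H² / 8`.
-/

open Finset Real

theorem sum_mul_exp_le_exp_of_mem_Icc {ι : Type*} [Fintype ι] {w x : ι → ℝ}
    (hw : ∀ i, 0 ≤ w i) (hw1 : ∑ i, w i = 1) {a b : ℝ} (hx : ∀ i, x i ∈ Set.Icc a b) (t : ℝ) :
    ∑ i, w i * exp (t * x i) ≤ exp (t * ∑ i, w i * x i + (b - a) ^ 2 * t ^ 2 / 8) := by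
  let _ : MeasurableSpace ι := ⊤
  let P : PMF ι := PMF.ofFintype (fun i ↦ ENNReal.ofReal (w i)) <| by
    rw [← ENNReal.ofReal_sum_of_nonneg fun i _ ↦ hw i, hw1, ENNReal.ofReal_one]
  have hP (f : ι → ℝ) : ∫ i, f i ∂P.toMeasure = ∑ i, w i * f i := by
    simp [P, PMF.integral_eq_sum, ENNReal.toReal_ofReal (hw _)]
  have hoeffding := (ProbabilityTheory.hasSubgaussianMGF_of_mem_Icc (μ := P.toMeasure) (X := x)
    (measurable_of_countable x).aemeasurable (MeasureTheory.ae_of_all _ hx)).mgf_le t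
  simp only [ProbabilityTheory.mgf, hP] at hoeffding
  have hc : ((‖b - a‖₊ / 2) ^ 2 : NNReal) * t ^ 2 / 2 = (b - a) ^ 2 * t ^ 2 / 8 := by
    push_cast [Real.norm_eq_abs, div_pow, sq_abs]
    ring
  have hcenter : ∑ i, w i * exp (t * (x i - ∑ j, w j * x j))
      = (∑ i, w i * exp (t * x i)) * exp (-(t * ∑ j, w j * x j)) := by
    rw [sum_mul]
    refine sum_congr rfl fun i _ ↦ ?_
    rw [mul_assoc, ← exp_add, mul_sub, sub_eq_add_neg]
  rwa [hcenter, hc, ← le_div_iff₀ (exp_pos _), ← exp_sub, sub_neg_eq_add, add_comm] at hoeffding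

theorem sum_mul_log_div_sub_sum_mul_log_div_of_tilt {ι : Type*} [Fintype ι]
    {r p q f : ι → ℝ} {Z : ℝ} (hp : ∀ i, p i ≠ 0) (hZ : Z ≠ 0) (hr : ∑ i, r i = 1)
    (hq : ∀ i, q i = p i * exp (f i) / Z) :
    ∑ i, r i * log (r i / p i) - ∑ i, r i * log (r i / q i) = ∑ i, r i * f i - log Z := by
  have hterm (i : ι) :
      r i * log (r i / p i) - r i * log (r i / q i) = r i * f i - r i * log Z := by
    rcases eq_or_ne (r i) 0 with h | h
    · simp [h]
    have hpf : p i * exp (f i) ≠ 0 := mul_ne_zero (hp i) (exp_pos _).ne'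
    have hq0 : q i ≠ 0 := by rw [hq]; exact div_ne_zero hpf hZ
    rw [log_div h (hp i), log_div h hq0, hq, log_div hpf hZ, log_mul (hp i) (exp_pos _).ne',
      log_exp]
    ring
  rw [← sum_sub_distrib, sum_congr rfl fun i _ ↦ hterm i, sum_sub_distrib, ← sum_mul, hr, one_mul]

theorem mirror_descent_step_general {A : Type*} [Fintype A] [Nonempty A]
    (p pstar : A → ℝ) (hp : ∀ a, 0 < p a)
    (hpsum : ∑ a, p a = 1) (hpssum : ∑ a, pstar a = 1)
    (H : ℝ) (g : A → ℝ) (hg : ∀ a, g a ∈ Set.Icc 0 H)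
    (α : ℝ) (hα : 0 < α)
    (q : A → ℝ)
    (hq : ∀ a, q a = p a * Real.exp (α * g a) / ∑ a', p a' * Real.exp (α * g a')) :
    ∑ a, g a * (pstar a - p a)
      ≤ α * H ^ 2 / 2
        + α⁻¹ * ((∑ a, pstar a * Real.log (pstar a / p a))
                 - (∑ a, pstar a * Real.log (pstar a / q a))) := by
  set Z := ∑ a, p a * exp (α * g a)
  have hZ : 0 < Z := sum_pos (fun a _ ↦ mul_pos (hp a) (exp_pos _)) univ_nonempty
  have hlogZ : log Z ≤ α * ∑ a, p a * g a + H ^ 2 * α ^ 2 / 8 := by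
    rw [log_le_iff_le_exp hZ]
    simpa only [sub_zero] using sum_mul_exp_le_exp_of_mem_Icc (fun a ↦ (hp a).le) hpsum hg α
  rw [sum_mul_log_div_sub_sum_mul_log_div_of_tilt (fun a ↦ (hp a).ne') hZ.ne' hpssum hq]
  have hgap : ∑ a, g a * (pstar a - p a) = ∑ a, pstar a * g a - ∑ a, p a * g a := by
    rw [← sum_sub_distrib]
    exact sum_congr rfl fun a _ ↦ by ring
  have hpull : ∑ a, pstar a * (α * g a) = α * ∑ a, pstar a * g a := by
    rw [mul_sum]
    exact sum_congr rfl fun a _ ↦ by ring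
  rw [hgap, hpull, mul_sub, inv_mul_cancel_left₀ hα.ne']
  have hlogZ_div : α⁻¹ * log Z ≤ ∑ a, p a * g a + α * H ^ 2 / 8 := by
    rw [inv_mul_le_iff₀ hα]
    linarith
  linarith [mul_nonneg hα.le (sq_nonneg H)]

/-- Mirror-descent one-step lemma: for probability distributions `p, p*` on a nonempty
finite set `A` with `p` everywhere positive, a function `g : A → [0, H]`, `α > 0`, and
the exponentially reweighted distribution `q a ∝ p a * exp (α * g a)`, one has
`⟨g, p* - p⟩ ≤ α H² / 2 + α⁻¹ (KL(p* ‖ p) - KL(p* ‖ q))`. -/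
theorem mirror_descent_step {A : Type*} [Fintype A] [Nonempty A]
    (p pstar : A → ℝ) (hp : ∀ a, 0 < p a) (hps : ∀ a, 0 ≤ pstar a)
    (hpsum : ∑ a, p a = 1) (hpssum : ∑ a, pstar a = 1)
    (H : ℝ) (hH : 0 ≤ H) (g : A → ℝ) (hg : ∀ a, g a ∈ Set.Icc 0 H)
    (α : ℝ) (hα : 0 < α)
    (q : A → ℝ)
    (hq : ∀ a, q a = p a * Real.exp (α * g a) / ∑ a', p a' * Real.exp (α * g a')) :
    ∑ a, g a * (pstar a - p a)
      ≤ α * H ^ 2 / 2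
        + α⁻¹ * ((∑ a, pstar a * Real.log (pstar a / p a))
                 - (∑ a, pstar a * Real.log (pstar a / q a))) :=
  mirror_descent_step_general p pstar hp hpsum hpssum H g hg α hα q hq
end

section
/- Let A be a nonempty finite set, λ > 0, and for y : A → ℝ define p_y = argmax_{q ∈ Δ(A)} (⟨q, y⟩ − λ R(q)), which equals the softmax p_y(a) = exp(y(a)/λ)/Σ_{a′} exp(y(a′)/λ). Then for all y₁, y₂ : A → ℝ, ‖p_{y₁} − p_{y₂}‖₁ ≤ (1/λ) ‖y₁ − y₂‖_∞. -/
/-! The derivative of `softmax` at `x` in direction `v` is `q ⊙ (v - ⟨q, v⟩)` with `q = softmax x`.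
Its `ℓ₁` norm is the mean absolute deviation of `v` under the probability vector `q`, which by
Cauchy–Schwarz is at most the standard deviation of `v`, hence at most `‖v‖∞`. The mean value
inequality along the segment from `y₂ / λ` to `y₁ / λ` then gives the bound. -/

open Finset Real

theorem abs_coe_sign_le_one {α : Type*} [Ring α] [LinearOrder α] [IsStrictOrderedRing α] (x : α) :
    |(SignType.sign x : α)| ≤ 1 := by
  rcases lt_trichotomy x 0 with h | h | h <;> simp [h]

section

variable {ι : Type*} [Fintype ι]

theorem sum_abs_sub_le_of_hasDerivAt {f f' : ι → ℝ → ℝ} {C : ℝ}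
    (hf : ∀ i, ∀ t ∈ Set.Icc (0 : ℝ) 1, HasDerivAt (f i) (f' i t) t)
    (bound : ∀ t ∈ Set.Ico (0 : ℝ) 1, ∑ i, |f' i t| ≤ C) :
    ∑ i, |f i 1 - f i 0| ≤ C := by
  -- pairing with the sign pattern of `f 1 - f 0` reduces this to the scalar mean value inequality
  set s : ι → ℝ := fun i => SignType.sign (f i 1 - f i 0)
  have hg : ∀ t ∈ Set.Icc (0 : ℝ) 1,
      HasDerivWithinAt (fun t => ∑ i, s i * f i t) (∑ i, s i * f' i t) (Set.Icc 0 1) t :=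
    fun t ht => (HasDerivAt.fun_sum fun i _ => (hf i t ht).const_mul (s i)).hasDerivWithinAt
  have hg' : ∀ t ∈ Set.Ico (0 : ℝ) 1, ‖∑ i, s i * f' i t‖ ≤ C := fun t ht =>
    calc |∑ i, s i * f' i t| ≤ ∑ i, |s i * f' i t| := abs_sum_le_sum_abs _ _
      _ ≤ ∑ i, |f' i t| := by
        refine sum_le_sum fun i _ => ?_
        rw [abs_mul]
        exact mul_le_of_le_one_left (abs_nonneg _) (abs_coe_sign_le_one _)
      _ ≤ C := bound t ht
  calc ∑ i, |f i 1 - f i 0| = ∑ i, s i * f i 1 - ∑ i, s i * f i 0 := by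
        simp only [← sum_sub_distrib, ← mul_sub, s, sign_mul_self]
    _ ≤ ‖∑ i, s i * f i 1 - ∑ i, s i * f i 0‖ := le_abs_self _
    _ ≤ C := norm_image_sub_le_of_norm_deriv_le_segment_01' hg hg'

theorem sum_mul_abs_sub_sum_mul_le {q v : ι → ℝ} {M : ℝ} (hq : ∀ i, 0 ≤ q i)
    (hq1 : ∑ i, q i = 1) (hv : ∀ i, |v i| ≤ M) :
    ∑ i, q i * |v i - ∑ j, q j * v j| ≤ M := by
  set m := ∑ j, q j * v j with hm
  have hM : 0 ≤ M := by
    obtain ⟨i, -⟩ := nonempty_of_sum_ne_zero (hq1.trans_ne one_ne_zero)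
    exact (abs_nonneg _).trans (hv i)
  have variance_eq : ∑ i, q i * (v i - m) ^ 2 = ∑ i, q i * v i ^ 2 - m ^ 2 := by
    calc ∑ i, q i * (v i - m) ^ 2 = ∑ i, (q i * v i ^ 2 - 2 * m * (q i * v i) + m ^ 2 * q i) :=
          sum_congr rfl fun i _ => by ring
      _ = ∑ i, q i * v i ^ 2 - m ^ 2 := by
          rw [sum_add_distrib, sum_sub_distrib, ← mul_sum, ← mul_sum, ← hm, hq1]; ring
  have second_moment_le : ∑ i, q i * v i ^ 2 ≤ M ^ 2 :=
    calc ∑ i, q i * v i ^ 2 ≤ ∑ i, q i * M ^ 2 := by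
          refine sum_le_sum fun i _ => mul_le_mul_of_nonneg_left ?_ (hq i)
          exact sq_le_sq' (abs_le.1 (hv i)).1 (abs_le.1 (hv i)).2
      _ = M ^ 2 := by rw [← sum_mul, hq1, one_mul]
  have cauchy_schwarz : (∑ i, q i * |v i - m|) ^ 2 ≤ ∑ i, q i * (v i - m) ^ 2 := by
    simpa [hq1] using sum_sq_le_sum_mul_sum_of_sq_le_mul univ (fun i _ => hq i)
      (fun i _ => mul_nonneg (hq i) (sq_nonneg (v i - m)))
      (fun i _ => (by rw [mul_pow, sq_abs]; ring : (q i * |v i - m|) ^ 2 = _).le)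
  refine le_trans (le_abs_self _) (abs_le_of_sq_le_sq ?_ hM)
  linarith [sq_nonneg m]

noncomputable def softmax (x : ι → ℝ) (i : ι) : ℝ := exp (x i) / ∑ j, exp (x j)

variable [Nonempty ι]

theorem sum_exp_pos (x : ι → ℝ) : 0 < ∑ j, exp (x j) :=
  sum_pos (fun j _ => exp_pos (x j)) univ_nonempty

theorem softmax_nonneg (x : ι → ℝ) (i : ι) : 0 ≤ softmax x i :=
  div_nonneg (exp_pos _).le (sum_exp_pos x).le

theorem sum_softmax (x : ι → ℝ) : ∑ i, softmax x i = 1 := by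
  simp only [softmax, ← sum_div, div_self (sum_exp_pos x).ne']

theorem hasDerivAt_softmax_add_smul (x v : ι → ℝ) (i : ι) (t : ℝ) :
    HasDerivAt (fun t => softmax (x + t • v) i)
      (softmax (x + t • v) i * (v i - ∑ j, softmax (x + t • v) j * v j)) t := by
  have hexp : ∀ j, HasDerivAt (fun t => exp ((x + t • v) j)) (exp ((x + t • v) j) * v j) t :=
    fun j => by simpa using (((hasDerivAt_id t).mul_const (v j)).const_add (x j)).exp
  have hN := (sum_exp_pos (x + t • v)).ne'
  refine ((hexp i).div (HasDerivAt.fun_sum fun j _ => hexp j) hN).congr_deriv ?_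
  simp only [softmax, div_mul_eq_mul_div, ← sum_div]
  field_simp

theorem sum_abs_softmax_sub_le {x x' : ι → ℝ} {M : ℝ} (h : ∀ i, |x i - x' i| ≤ M) :
    ∑ i, |softmax x i - softmax x' i| ≤ M := by
  have key := sum_abs_sub_le_of_hasDerivAt (C := M)
    (fun i t _ => hasDerivAt_softmax_add_smul x' (x - x') i t) fun t _ => by
      simp only [abs_mul, abs_of_nonneg (softmax_nonneg _ _)]
      exact sum_mul_abs_sub_sum_mul_le (softmax_nonneg _) (sum_softmax _) h
  simpa using key

end

/-- The softmax map `y ↦ p_y`, `p_y a = exp (y a / λ) / ∑ a', exp (y a' / λ)` (which is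
the maximizer of `q ↦ ⟨q, y⟩ - λ R(q)` over the simplex, `R` being negative entropy), is
`(1 / λ)`-Lipschitz from `ℓ∞` to `ℓ₁`:
`‖p_{y₁} - p_{y₂}‖₁ ≤ (1 / λ) ‖y₁ - y₂‖∞`. -/
theorem softmax_lipschitz {A : Type*} [Fintype A] [Nonempty A]
    (lam : ℝ) (hlam : 0 < lam) (y₁ y₂ : A → ℝ) :
    ∑ a, |Real.exp (y₁ a / lam) / (∑ a', Real.exp (y₁ a' / lam))
          - Real.exp (y₂ a / lam) / (∑ a', Real.exp (y₂ a' / lam))|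
      ≤ (1 / lam) * (Finset.univ.sup' Finset.univ_nonempty fun a => |y₁ a - y₂ a|) := by
  refine sum_abs_softmax_sub_le (x := fun a => y₁ a / lam) (x' := fun a => y₂ a / lam) fun a => ?_
  rw [← sub_div, abs_div, abs_of_pos hlam, div_eq_inv_mul, one_div]
  exact mul_le_mul_of_nonneg_left (le_sup' (fun a => |y₁ a - y₂ a|) (mem_univ a))
    (inv_nonneg.2 hlam.le)
end
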